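/- arXiv:0909.4368 — 2 statements merged into one kernel-verified Lean document; each statement's English description precedes it below -/
import Mathlib

section
/- Let G be an unmixed graph as in the setup such that no cycle C_{i_1...i_r} (r ≥ 2) is contained in G. Then the relation on X defined by x_i ⪯ x_j iff x_i y_j ∈ E(G) is a partial order. -/
open SimpleGraph

/-- `C` is a vertex cover of `G`. -/
def IsVC {V : Type*} (G : SimpleGraph V) (C : Set V) : Prop :=
  ∀ ⦃u v : V⦄, G.Adj u v → u ∈ C ∨ v ∈ C

/-- `C` is a minimal (inclusion-wise) vertex cover of `G`. -/
def IsMinVC {V : Type*} (G : SimpleGraph V) (C : Set V) : Prop :=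
  IsVC G C ∧ ∀ C' : Set V, C' ⊆ C → IsVC G C' → C' = C

/-- `A` is an independent set of `G`. -/
def IsIndep {V : Type*} (G : SimpleGraph V) (A : Set V) : Prop :=
  ∀ ⦃u v : V⦄, u ∈ A → v ∈ A → ¬ G.Adj u v

/-- `A` is a maximal independent set of `G`. -/
def IsMaxIndep {V : Type*} (G : SimpleGraph V) (A : Set V) : Prop :=
  IsIndep G A ∧ ∀ A' : Set V, A ⊆ A' → IsIndep G A' → A' = A

/-- `G` is unmixed: all minimal vertex covers have the same cardinality. -/
def Unmixed {V : Type*} (G : SimpleGraph V) : Prop :=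
  ∀ C₁ C₂ : Set V, IsMinVC G C₁ → IsMinVC G C₂ → C₁.ncard = C₂.ncard

/-- Vertex type with the two classes `X = {x_1,…,x_n}` (left) and `Y = {y_1,…,y_n}` (right). -/
abbrev VT (n : ℕ) := Fin n ⊕ Fin n

/-- The vertex `x_i`. -/
def xv {n : ℕ} (i : Fin n) : VT n := Sum.inl i

/-- The vertex `y_i`. -/
def yv {n : ℕ} (i : Fin n) : VT n := Sum.inr i

/-- The 4-cycle `C_{ij}` (edges `x_iy_i, y_ix_j, x_jy_j, y_jx_i`) is contained in `G`. -/
def HasC2 {n : ℕ} (G : SimpleGraph (VT n)) (i j : Fin n) : Prop :=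
  G.Adj (xv i) (yv i) ∧ G.Adj (yv i) (xv j) ∧ G.Adj (xv j) (yv j) ∧ G.Adj (yv j) (xv i)

/-- The `2r`-cycle `C_{i_1…i_r}` given by `f : Fin r → Fin n` is contained in `G`:
edges `x_{f s} y_{f s}` and `y_{f s} x_{f (s+1)}` (cyclically). -/
def IsCycleIn {n r : ℕ} (G : SimpleGraph (VT n)) (f : Fin r → Fin n) : Prop :=
  ∀ s : Fin r, G.Adj (xv (f s)) (yv (f s)) ∧ G.Adj (yv (f s)) (xv (f (finRotate r s)))

/-!
Transitivity: if `x_iy_j, x_jy_k ∈ E(G)` but `x_iy_k ∉ E(G)`, then `(X \ {x_i}) ∪ N(x_i)` is a vertex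
cover avoiding `x_i` and `y_k`. A minimal vertex cover `C` inside it has `n` elements by unmixedness,
yet it meets every matching edge `x_my_m` and contains both `x_j` (to cover `x_jy_k`) and `y_j`
(to cover `x_iy_j`), so it has at least `n + 1` elements.

Antisymmetry: `x_iy_j, x_jy_i ∈ E(G)` with `i ≠ j` is the forbidden cycle `C_{ij}`.
-/

theorem isMinVC_iff_minimal {V : Type*} {G : SimpleGraph V} {C : Set V} :
    IsMinVC G C ↔ Minimal (IsVC G) C :=
  and_congr_right fun _ =>
    ⟨fun h _ hC' hle => (h _ hle hC').ge, fun h _ hle hC' => hle.antisymm (h hC' hle)⟩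

theorem IsVC.exists_isMinVC_subset {V : Type*} [Finite V] {G : SimpleGraph V} {D : Set V}
    (hD : IsVC G D) : ∃ C ⊆ D, IsMinVC G C := by
  simpa only [isMinVC_iff_minimal] using exists_minimal_le_of_wellFoundedLT (IsVC G) D hD

theorem IsVC.diff_singleton_union_neighborSet {V : Type*} {G : SimpleGraph V} {X : Set V}
    (hX : IsVC G X) (v : V) : IsVC G (X \ {v} ∪ G.neighborSet v) := by
  intro a b hab
  by_cases ha : a = v
  · subst ha
    exact Or.inr (Or.inr hab)
  by_cases hb : b = v
  · subst hb
    exact Or.inl (Or.inr hab.symm)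
  exact (hX hab).imp (fun h => Or.inl ⟨h, ha⟩) (fun h => Or.inl ⟨h, hb⟩)

theorem ncard_range_xv (n : ℕ) : (Set.range (xv : Fin n → VT n)).ncard = n :=
  (Set.ncard_range_of_injective (f := xv) Sum.inl_injective).trans (Nat.card_fin n)

theorem IsVC.lt_ncard_of_mem_of_mem {n : ℕ} {G : SimpleGraph (VT n)} {C : Set (VT n)}
    (hC : IsVC G C) (hm : ∀ m : Fin n, G.Adj (xv m) (yv m)) {j : Fin n}
    (hxj : xv j ∈ C) (hyj : yv j ∈ C) : n < C.ncard := by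
  classical
  set s := C.toFinset
  have hcover : s.toLeft ∪ s.toRight = Finset.univ :=
    Finset.eq_univ_of_forall fun m => by
      simpa [s, xv, yv, Finset.mem_union, Finset.mem_toLeft, Finset.mem_toRight] using hC (hm m)
  have hj : j ∈ s.toLeft ∩ s.toRight := by
    simpa [s, xv, yv, Finset.mem_toLeft, Finset.mem_toRight] using And.intro hxj hyj
  calc n = (s.toLeft ∪ s.toRight).card := by rw [hcover, Finset.card_univ, Fintype.card_fin]
    _ < (s.toLeft ∪ s.toRight).card + (s.toLeft ∩ s.toRight).card :=
      Nat.lt_add_of_pos_right (Finset.card_pos.mpr ⟨j, hj⟩)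
    _ = s.card := by rw [Finset.card_union_add_card_inter, Finset.card_toLeft_add_card_toRight]
    _ = C.ncard := (Set.ncard_eq_toFinset_card' C).symm

theorem adj_xv_yv_trans {n : ℕ} {G : SimpleGraph (VT n)}
    (hX : IsMinVC G (Set.range (xv : Fin n → VT n))) (hm : ∀ i : Fin n, G.Adj (xv i) (yv i))
    (hu : Unmixed G) {i j k : Fin n} (hij : G.Adj (xv i) (yv j)) (hjk : G.Adj (xv j) (yv k)) :
    G.Adj (xv i) (yv k) := by
  by_contra hik
  obtain ⟨C, hCD, hC⟩ := (hX.1.diff_singleton_union_neighborSet (xv i)).exists_isMinVC_subset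
  have hxi : xv i ∉ C := fun h => by
    rcases hCD h with ⟨-, hne⟩ | hadj
    · exact hne rfl
    · exact G.loopless.irrefl _ hadj
  have hyk : yv k ∉ C := fun h => by
    rcases hCD h with ⟨⟨m, hm⟩, -⟩ | hadj
    · exact Sum.inl_ne_inr hm
    · exact hik hadj
  have hcard := hC.1.lt_ncard_of_mem_of_mem hm ((hC.1 hjk).resolve_right hyk)
    ((hC.1 hij).resolve_left hxi)
  rw [hu C _ hC hX, ncard_range_xv] at hcard
  exact hcard.false

theorem HasC2.isCycleIn {n : ℕ} {G : SimpleGraph (VT n)} {i j : Fin n} (h : HasC2 G i j) :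
    IsCycleIn G ![i, j] := by
  obtain ⟨hi, hij, hj, hji⟩ := h
  intro s
  fin_cases s
  · exact ⟨hi, hij⟩
  · exact ⟨hj, hji⟩

theorem eq_of_adj_xv_yv_of_adj_xv_yv {n : ℕ} {G : SimpleGraph (VT n)}
    (hm : ∀ i : Fin n, G.Adj (xv i) (yv i))
    (hnc : ∀ r : ℕ, 2 ≤ r → ∀ f : Fin r → Fin n, Function.Injective f → ¬ IsCycleIn G f)
    {i j : Fin n} (hij : G.Adj (xv i) (yv j)) (hji : G.Adj (xv j) (yv i)) : i = j := by
  by_contra hne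
  refine hnc 2 le_rfl ![i, j] ?_ (HasC2.isCycleIn ⟨hm i, hji.symm, hm j, hij.symm⟩)
  simpa [Fin.cons_injective_iff] using hne

theorem adj_relation_partial_order_general {n : ℕ} (G : SimpleGraph (VT n))
    (hX : IsMinVC G (Set.range (xv : Fin n → VT n)))
    (hm : ∀ i : Fin n, G.Adj (xv i) (yv i))
    (hu : Unmixed G)
    (hnc : ∀ r : ℕ, 2 ≤ r → ∀ f : Fin r → Fin n, Function.Injective f → ¬ IsCycleIn G f) :
    (∀ i : Fin n, G.Adj (xv i) (yv i)) ∧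
      (∀ i j k : Fin n, G.Adj (xv i) (yv j) → G.Adj (xv j) (yv k) → G.Adj (xv i) (yv k)) ∧
      (∀ i j : Fin n, G.Adj (xv i) (yv j) → G.Adj (xv j) (yv i) → i = j) :=
  ⟨hm, fun _ _ _ => adj_xv_yv_trans hX hm hu, fun _ _ => eq_of_adj_xv_yv_of_adj_xv_yv hm hnc⟩

/-- For an unmixed graph `G` (setup (*)) with no cycle `C_{i_1…i_r}` (`r ≥ 2`), the relation
`x_i ⪯ x_j ⟺ x_iy_j ∈ E(G)` is a partial order: reflexive, transitive and antisymmetric. -/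
theorem adj_relation_partial_order {n : ℕ} (G : SimpleGraph (VT n))
    (hni : ∀ v : VT n, ∃ u : VT n, G.Adj u v)
    (hX : IsMinVC G (Set.range (xv : Fin n → VT n)))
    (hY : IsMaxIndep G (Set.range (yv : Fin n → VT n)))
    (hm : ∀ i : Fin n, G.Adj (xv i) (yv i))
    (hht : ∀ C : Set (VT n), IsVC G C → n ≤ C.ncard)
    (hu : Unmixed G)
    (hnc : ∀ r : ℕ, 2 ≤ r → ∀ f : Fin r → Fin n, Function.Injective f → ¬ IsCycleIn G f) :
    (∀ i : Fin n, G.Adj (xv i) (yv i)) ∧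
      (∀ i j k : Fin n, G.Adj (xv i) (yv j) → G.Adj (xv j) (yv k) → G.Adj (xv i) (yv k)) ∧
      (∀ i j : Fin n, G.Adj (xv i) (yv j) → G.Adj (xv j) (yv i) → i = j) :=
  adj_relation_partial_order_general G hX hm hu hnc
end

section
/- Let G be an unmixed graph as in the setup such that G contains no cycle C_{ij} for i < j. Then there exists a permutation σ of {1,...,n} such that, after simultaneously relabeling x_{σ(1)},...,x_{σ(n)} as x_1,...,x_n and y_{σ(1)},...,y_{σ(n)} as y_1,...,y_n, the relabeled graph satisfies: x_i y_j ∈ E(G) implies i ≤ j. -/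
open SimpleGraph

/-!
Write `x_i ⪯ x_j` for `x_iy_j ∈ E(G)`. Reflexivity is the perfect matching `x_iy_i`, and
antisymmetry is the absence of the cycles `C_{ij}`. For transitivity, suppose `x_i ⪯ x_j ⪯ x_k`
but `x_iy_k ∉ E(G)`: extend `{x_i, y_k}` to a maximal independent set `A`. Its complement is a
minimal vertex cover, so by unmixedness `|A| = 2n - |X| = n`; but an independent set meets each
matching edge `x_ly_l` at most once, and `A` misses both `x_j` (a neighbour of `y_k`) and `y_j`
(a neighbour of `x_i`), so `|A| ≤ n - 1`. A linear extension of `⪯` gives the relabeling.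
-/

section Graph

variable {V : Type*} {G : SimpleGraph V} {A : Set V}

theorem IsMaxIndep.exists_adj_of_notMem (hA : IsMaxIndep G A) {v : V} (hv : v ∉ A) :
    ∃ a ∈ A, G.Adj v a := by
  by_contra! hnone
  have hindep : IsIndep G (insert v A) := by
    rintro p q (rfl | hp) (rfl | hq) hpq
    · exact G.irrefl hpq
    · exact hnone q hq hpq
    · exact hnone p hp hpq.symm
    · exact hA.1 hp hq hpq
  exact hv (hA.2 _ (Set.subset_insert v A) hindep ▸ Set.mem_insert v A)

theorem IsMaxIndep.isMinVC_compl (hA : IsMaxIndep G A) : IsMinVC G Aᶜ := by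
  refine ⟨fun u v huv => ?_, fun C hC hcover => ?_⟩
  · by_contra! h
    simp only [Set.mem_compl_iff, not_not] at h
    exact hA.1 h.1 h.2 huv
  · refine hC.antisymm fun v hv => ?_
    obtain ⟨a, ha, hva⟩ := hA.exists_adj_of_notMem hv
    exact (hcover hva).resolve_right fun haC => hC haC ha

theorem IsIndep.exists_isMaxIndep_superset [Finite V] (hA : IsIndep G A) :
    ∃ B, A ⊆ B ∧ IsMaxIndep G B := by
  obtain ⟨B, hAB, hB⟩ := Finite.exists_le_maximal (p := IsIndep G) hA
  exact ⟨B, hAB, hB.1, fun B' hBB' hB' => (hB.2 hB' hBB').antisymm hBB'⟩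

theorem Unmixed.ncard_add_ncard_of_isMaxIndep [Finite V] (hG : Unmixed G) {C : Set V}
    (hC : IsMinVC G C) (hA : IsMaxIndep G A) : A.ncard + C.ncard = Nat.card V := by
  rw [hG C Aᶜ hC hA.isMinVC_compl, Set.ncard_add_ncard_compl]

end Graph

theorem Fintype.exists_equiv_fin_of_isPartialOrder {α : Type*} [Fintype α] {n : ℕ}
    (hα : Fintype.card α = n) (r : α → α → Prop) (hrefl : ∀ a, r a a)
    (htrans : ∀ a b c, r a b → r b c → r a c) (hanti : ∀ a b, r a b → r b a → a = b) :
    ∃ e : Fin n ≃ α, ∀ i j, r (e i) (e j) → i ≤ j := by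
  let _ : PartialOrder α :=
    { le := r, le_refl := hrefl, le_trans := htrans, le_antisymm := hanti }
  let _ : Fintype (LinearExtension α) := ‹Fintype α›
  let e := monoEquivOfFin (LinearExtension α) hα
  have hmono : ∀ a b : α, r a b → toLinearExtension a ≤ toLinearExtension b :=
    fun _ _ hab => toLinearExtension.monotone hab
  exact ⟨e.toEquiv, fun i j hij => e.le_iff_le.1 (hmono _ _ hij)⟩

section Matched

variable {n : ℕ} {G : SimpleGraph (VT n)}

theorem IsIndep.ncard_lt_of_notMem (hm : ∀ i : Fin n, G.Adj (xv i) (yv i)) {A : Set (VT n)}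
    (hA : IsIndep G A) {j : Fin n} (hx : xv j ∉ A) (hy : yv j ∉ A) : A.ncard < n := by
  have hinj : Set.InjOn (Sum.elim id id : VT n → Fin n) A := by
    rintro (a | a) ha (b | b) hb (rfl : a = b)
    exacts [rfl, absurd (hm a) (hA ha hb), absurd (hm a) (hA hb ha), rfl]
  have hmaps : ∀ v ∈ A, Sum.elim id id v ∈ ({j}ᶜ : Set (Fin n)) := by
    rintro (a | a) ha (rfl : a = j)
    exacts [hx ha, hy ha]
  have hcompl : ({j}ᶜ : Set (Fin n)).ncard = n - 1 := by
    rw [Set.ncard_compl, Set.ncard_singleton, Nat.card_fin]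
  have hle := Set.ncard_le_ncard_of_injOn _ hmaps hinj
  have hpos := j.pos
  omega

theorem Unmixed.adj_trans (hG : Unmixed G) (hX : IsMinVC G (Set.range (xv : Fin n → VT n)))
    (hm : ∀ i : Fin n, G.Adj (xv i) (yv i)) {i j k : Fin n} (hij : G.Adj (xv i) (yv j))
    (hjk : G.Adj (xv j) (yv k)) : G.Adj (xv i) (yv k) := by
  by_contra hik
  have hpair : IsIndep G {xv i, yv k} := by
    rintro u v (rfl | rfl) (rfl | rfl) huv
    exacts [G.irrefl huv, hik huv, hik huv.symm, G.irrefl huv]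
  obtain ⟨A, hpairA, hA⟩ := hpair.exists_isMaxIndep_superset
  have hxi : xv i ∈ A := hpairA (Set.mem_insert _ _)
  have hyk : yv k ∈ A := hpairA (Set.mem_insert_of_mem _ rfl)
  have hlt := hA.1.ncard_lt_of_notMem hm (fun h => hA.1 h hyk hjk) (fun h => hA.1 hxi h hij)
  have hcard := hG.ncard_add_ncard_of_isMaxIndep hX hA
  rw [Set.ncard_range_of_injective (f := xv) Sum.inl_injective, Nat.card_sum, Nat.card_fin]
    at hcard
  omega

theorem eq_of_adj_of_adj_of_not_hasC2 (hm : ∀ i : Fin n, G.Adj (xv i) (yv i))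
    (h2 : ∀ i j : Fin n, i < j → ¬ HasC2 G i j) {i j : Fin n} (hij : G.Adj (xv i) (yv j))
    (hji : G.Adj (xv j) (yv i)) : i = j := by
  rcases lt_trichotomy i j with h | h | h
  · exact absurd ⟨hm i, hji.symm, hm j, hij.symm⟩ (h2 i j h)
  · exact h
  · exact absurd ⟨hm j, hij.symm, hm i, hji.symm⟩ (h2 j i h)

end Matched

theorem exists_relabeling_general {n : ℕ} (G : SimpleGraph (VT n))
    (hX : IsMinVC G (Set.range (xv : Fin n → VT n)))
    (hm : ∀ i : Fin n, G.Adj (xv i) (yv i))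
    (hu : Unmixed G)
    (h2 : ∀ i j : Fin n, i < j → ¬ HasC2 G i j) :
    ∃ σ : Equiv.Perm (Fin n), ∀ i j : Fin n, G.Adj (xv (σ i)) (yv (σ j)) → i ≤ j :=
  Fintype.exists_equiv_fin_of_isPartialOrder (Fintype.card_fin n)
    (fun i j => G.Adj (xv i) (yv j)) hm (fun _ _ _ => hu.adj_trans hX hm)
    (fun _ _ => eq_of_adj_of_adj_of_not_hasC2 hm h2)

/-- For an unmixed graph `G` (setup (*)) containing no cycle `C_{ij}` (`i < j`), there is a
simultaneous relabeling `σ` of the `x_i`'s and `y_i`'s after which `x_iy_j ∈ E(G)` implies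
`i ≤ j`. -/
theorem exists_relabeling {n : ℕ} (G : SimpleGraph (VT n))
    (hni : ∀ v : VT n, ∃ u : VT n, G.Adj u v)
    (hX : IsMinVC G (Set.range (xv : Fin n → VT n)))
    (hY : IsMaxIndep G (Set.range (yv : Fin n → VT n)))
    (hm : ∀ i : Fin n, G.Adj (xv i) (yv i))
    (hht : ∀ C : Set (VT n), IsVC G C → n ≤ C.ncard)
    (hu : Unmixed G)
    (h2 : ∀ i j : Fin n, i < j → ¬ HasC2 G i j) :
    ∃ σ : Equiv.Perm (Fin n), ∀ i j : Fin n, G.Adj (xv (σ i)) (yv (σ j)) → i ≤ j :=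
  exists_relabeling_general G hX hm hu h2
end
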